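/- arXiv:1809.00369 — 3 statements merged into one kernel-verified Lean document; each statement's English description precedes it below -/
import Mathlib

section
/- Let n, s be positive integers with (s+1)(s+2) ≤ 2n, and let ℘(s,n) = (p₁, …, p_{s+1}) be as defined. Then p₁ ≥ 1, i.e., all entries of ℘(s,n) are positive integers. -/
/-- Partial sums `p₁ + ⋯ + p_j` of the tuple `℘(s,n)`, defined recursively:
`p_{j+1} = ⌊(n − (p₁ + ⋯ + p_j))/(s+1−j) − (s−j)/2⌋` (0-indexed `j`). -/
def wpSum (s n : ℕ) : ℕ → ℤ
  | 0 => 0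
  | j + 1 => wpSum s n j +
      ⌊((n : ℚ) - wpSum s n j) / ((s : ℚ) + 1 - j) - ((s : ℚ) - j) / 2⌋

/-- The entry `p_{j+1}` of `℘(s,n)` (0-indexed). -/
def wp (s n : ℕ) (j : ℕ) : ℤ := wpSum s n (j + 1) - wpSum s n j

/-!
With `m + 1 = s + 1 - j` entries still to be chosen and `x = n - (p₁ + ⋯ + p_j)` left to
distribute, the hypothesis propagates as the invariant `(m + 1)(m + 2) ≤ 2x`. Under it the next
entry `⌊x/(m+1) - m/2⌋` is at least `⌊(m+2)/2 - m/2⌋ = 1`, and it is small enough that what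
remains still satisfies the invariant for `m - 1`.
-/

lemma one_le_floor_div_sub_half {x m : ℚ} (hm : 0 ≤ m) (hx : (m + 1) * (m + 2) ≤ 2 * x) :
    1 ≤ ⌊x / (m + 1) - m / 2⌋ := by
  have hm1 : 0 < m + 1 := by linarith
  rw [Int.le_floor, Int.cast_one, le_sub_iff_add_le, le_div_iff₀ hm1]
  linarith

lemma mul_succ_le_two_mul_sub_floor {x m : ℚ} (hm : 0 ≤ m) (hx : (m + 1) * (m + 2) ≤ 2 * x) :
    m * (m + 1) ≤ 2 * (x - ⌊x / (m + 1) - m / 2⌋) := by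
  have hm1 : 0 < m + 1 := by linarith
  have hfloor : ((⌊x / (m + 1) - m / 2⌋ : ℚ) + m / 2) * (m + 1) ≤ x := by
    rw [← le_div_iff₀ hm1]
    linarith [Int.floor_le (x / (m + 1) - m / 2)]
  nlinarith

lemma wp_eq_floor (s n j : ℕ) :
    wp s n j = ⌊((n : ℚ) - wpSum s n j) / ((s - j : ℚ) + 1) - (s - j : ℚ) / 2⌋ := by
  rw [wp, wpSum, add_sub_cancel_left, add_sub_right_comm]

lemma wpSum_succ (s n j : ℕ) : wpSum s n (j + 1) = wpSum s n j + wp s n j := by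
  rw [wp, add_sub_cancel]

lemma wpSum_invariant (s n : ℕ) (h : (s + 1) * (s + 2) ≤ 2 * n) :
    ∀ j ≤ s, ((s - j : ℚ) + 1) * ((s - j : ℚ) + 2) ≤ 2 * ((n : ℚ) - wpSum s n j) := by
  intro j
  induction j with
  | zero =>
    intro _
    simpa [wpSum] using (by exact_mod_cast h : ((s + 1) * (s + 2) : ℚ) ≤ 2 * n)
  | succ j ih =>
    intro hj
    have hm : (0 : ℚ) ≤ s - j := sub_nonneg.mpr (by exact_mod_cast j.le_succ.trans hj)
    have step := mul_succ_le_two_mul_sub_floor hm (ih (j.le_succ.trans hj))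
    rw [wpSum_succ, wp_eq_floor]
    push_cast
    linarith

theorem wp_entries_pos_general (s n : ℕ)
    (h : (s + 1) * (s + 2) ≤ 2 * n) :
    ∀ j ≤ s, 1 ≤ wp s n j := by
  intro j hj
  rw [wp_eq_floor]
  exact one_le_floor_div_sub_half (sub_nonneg.mpr (by exact_mod_cast hj))
    (wpSum_invariant s n h j hj)

theorem wp_entries_pos (s n : ℕ) (hs : 1 ≤ s) (hn : 1 ≤ n)
    (h : (s + 1) * (s + 2) ≤ 2 * n) :
    ∀ j ≤ s, 1 ≤ wp s n j :=
  wp_entries_pos_general s n h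
end

section
/- Let s ≥ 2, (s+1)(s+2) ≤ 2n, and ℘(s,n) = (p₁, …, p_{s+1}), ℘(s−1,n) = (q₁, …, q_s). Write p₁ + e = bs + d with b, d nonnegative integers, 0 ≤ d ≤ s−1, where e is the remainder of n − s(s+1)/2 modulo s+1 as in the definition of ℘(s,n). Then q₁ = p₁ + b + 1 > p₁ and ϖ(s,n) − ϖ(s−1,n) = p₁(s+1−e) + bd(s+1) + (1/2)b(b−1)s(s+1) ≥ 2p₁. -/
/-- `ϖ(s,n) = wt(n, ℘(s,n))`. -/
def wpWeight (s n : ℕ) : ℤ :=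
  ((n : ℤ) ^ 2 - ∑ j ∈ Finset.range (s + 1), (wp s n j) ^ 2) / 2

theorem Int.floor_div_sub_half_eq {K : Type*} [Field K] [LinearOrder K] [IsStrictOrderedRing K]
    [FloorRing K] {x m c u r : ℤ} (hr : 0 ≤ r) (hrm : r < m)
    (h : 2 * x = (2 * u + c) * m + 2 * r) :
    ⌊(x : K) / m - (c : K) / 2⌋ = u := by
  have hm : (0 : K) < m := by exact_mod_cast hr.trans_lt hrm
  have hx : (x : K) / m - (c : K) / 2 = u + (r : K) / m := by
    have h' : 2 * (x : K) = (2 * u + c) * m + 2 * r := by exact_mod_cast h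
    field_simp
    linear_combination h'
  rw [hx, Int.floor_intCast_add, add_eq_left, Int.floor_eq_zero_iff]
  exact ⟨by positivity, (div_lt_one hm).mpr (by exact_mod_cast hrm)⟩

theorem Finset.sum_range_add_omit {M : Type*} [AddCommGroup M] (f : ℤ → M) (t : ℤ) {k m : ℕ}
    (hkm : k ≤ m) :
    ∑ j ∈ range m, f (t + j + if k ≤ j then 1 else 0)
      = ∑ j ∈ range (m + 1), f (t + j) - f (t + k) := by
  induction m, hkm using Nat.le_induction with
  | base =>
    rw [sum_range_succ, add_sub_cancel_right]
    exact sum_congr rfl fun j hj => by rw [if_neg (by simpa using hj), add_zero]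
  | succ m hkm ih =>
    rw [sum_range_succ, ih, if_pos hkm, sum_range_succ _ (m + 1)]
    push_cast
    abel_nf

theorem six_mul_sum_range_add_sq (t : ℤ) (m : ℕ) :
    6 * ∑ j ∈ Finset.range m, (t + j) ^ 2
      = 6 * m * t ^ 2 + 6 * t * m * (m - 1) + m * (m - 1) * (2 * m - 1) := by
  induction m with
  | zero => simp
  | succ m ih => rw [Finset.sum_range_succ, mul_add, ih]; push_cast; ring

theorem even_sq_sum_sub_sum_sq {ι : Type*} (s : Finset ι) (a : ι → ℤ) :
    Even ((∑ i ∈ s, a i) ^ 2 - ∑ i ∈ s, a i ^ 2) := by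
  have hsq (x : ℤ) : x ^ 2 = x * (x - 1) + x := by ring
  simp only [hsq, Finset.sum_add_distrib, add_sub_add_right_eq_sub]
  exact (Int.even_mul_pred_self _).sub (Finset.even_sum _ fun i _ => Int.even_mul_pred_self _)

theorem sum_range_wp (s n m : ℕ) : ∑ j ∈ Finset.range m, wp s n j = wpSum s n m := by
  simp only [wp]
  rw [Finset.sum_range_sub]
  simp [wpSum]

theorem two_mul_wpWeight (s n : ℕ) (h : wpSum s n (s + 1) = n) :
    2 * wpWeight s n = n ^ 2 - ∑ j ∈ Finset.range (s + 1), wp s n j ^ 2 := by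
  refine Int.mul_ediv_cancel' (Even.two_dvd ?_)
  simpa only [sum_range_wp, h] using even_sq_sum_sub_sum_sq (Finset.range (s + 1)) (wp s n)

section ClosedForm

variable {s n e : ℕ} {t : ℤ} (he : e ≤ s)
  (hn : 2 * (n : ℤ) = 2 * t * (s + 1) + 2 * e + s * (s + 1))
include he hn

theorem two_mul_wpSum {j : ℕ} (hj : j ≤ s + 1) :
    2 * wpSum s n j = 2 * j * t + j * (j - 1) + 2 * max 0 ((j : ℤ) - (s + 1 - e)) := by
  induction j with
  | zero => simp [wpSum]; omega
  | succ j ih =>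
    have ih := ih (by omega)
    have hstep : ⌊((n : ℚ) - wpSum s n j) / ((s : ℚ) + 1 - j) - ((s : ℚ) - j) / 2⌋
        = t + j + if s + 1 - e ≤ j then 1 else 0 := by
      have key := Int.floor_div_sub_half_eq (K := ℚ) (x := n - wpSum s n j) (m := s + 1 - j)
        (c := s - j) (u := t + j + if s + 1 - e ≤ j then 1 else 0)
        (r := if s + 1 - e ≤ j then 0 else e) (by split_ifs <;> omega) (by split_ifs <;> omega)
        (by split_ifs with hk
            · rw [max_eq_right (by omega)] at ih; linear_combination hn - ih
            · rw [max_eq_left (by omega)] at ih; linear_combination hn - ih)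
      push_cast at key
      exact key
    rw [wpSum, mul_add, ih, hstep]
    split_ifs with hk
    · rw [max_eq_right (by omega), max_eq_right (by omega)]; push_cast; ring
    · rw [max_eq_left (by omega), max_eq_left (by omega)]; push_cast; ring

theorem wp_eq {j : ℕ} (hj : j ≤ s) : wp s n j = t + j + if s + 1 - e ≤ j then 1 else 0 := by
  have h1 := two_mul_wpSum he hn (j := j + 1) (by omega)
  have h0 := two_mul_wpSum he hn (j := j) (by omega)
  rw [wp]
  split_ifs with hk
  · rw [max_eq_right (by omega)] at h0 h1; push_cast at h1; linarith
  · rw [max_eq_left (by omega)] at h0 h1; push_cast at h1; linarith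

theorem wpSum_succ_self : wpSum s n (s + 1) = n := by
  have h := two_mul_wpSum he hn le_rfl
  rw [max_eq_right (by omega)] at h
  push_cast at h
  linarith

theorem six_mul_sum_sq_wp :
    6 * ∑ j ∈ Finset.range (s + 1), wp s n j ^ 2
      = 6 * (s + 2) * t ^ 2 + 6 * t * (s + 2) * (s + 1) + (s + 2) * (s + 1) * (2 * s + 3)
        - 6 * (t + s + 1 - e) ^ 2 := by
  rw [Finset.sum_congr rfl fun j hj => by
      rw [wp_eq he hn (Finset.mem_range_succ_iff.mp hj)],
    Finset.sum_range_add_omit (· ^ 2) t (Nat.sub_le _ _), mul_sub, six_mul_sum_range_add_sq]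
  push_cast [Nat.cast_sub (show e ≤ s + 1 by omega)]
  ring

theorem twelve_mul_wpWeight :
    12 * wpWeight s n = 6 * n ^ 2 - (6 * (s + 2) * t ^ 2 + 6 * t * (s + 2) * (s + 1)
      + (s + 2) * (s + 1) * (2 * s + 3) - 6 * (t + s + 1 - e) ^ 2) := by
  rw [← six_mul_sum_sq_wp he hn, show (12 : ℤ) = 6 * 2 by norm_num, mul_assoc,
    two_mul_wpWeight s n (wpSum_succ_self he hn)]
  ring

end ClosedForm

theorem wp_zero (s n : ℕ) : wp s n 0 = ⌊(n : ℚ) / ((s : ℚ) + 1) - (s : ℚ) / 2⌋ := by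
  simp [wp, wpSum]

theorem four_mul_le_of_add_eq_mul_add {s t e b d : ℤ} (ht : 1 ≤ t) (he0 : 0 ≤ e) (he : e ≤ s)
    (hb : 0 ≤ b) (hd0 : 0 ≤ d) (hd : d < s) (h : t + e = b * s + d) :
    2 * (2 * t) ≤ 2 * (t * (s + 1 - e) + b * d * (s + 1)) + b * (b - 1) * s * (s + 1) := by
  have hbb : 0 ≤ b * (b - 1) := by
    rcases (show b = 0 ∨ 1 ≤ b by omega) with rfl | hb1
    · simp
    · exact mul_nonneg hb (by linarith)
  rcases lt_or_eq_of_le he with he | rfl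
  · have h1 : 0 ≤ t * (s - 1 - e) := mul_nonneg (by linarith) (by linarith)
    have h2 : 0 ≤ b * d * (s + 1) := mul_nonneg (mul_nonneg hb hd0) (by linarith)
    have h3 : 0 ≤ b * (b - 1) * s * (s + 1) :=
      mul_nonneg (mul_nonneg hbb (by linarith)) (by linarith)
    linarith
  · have hb1 : 1 ≤ b := by nlinarith
    have h1 : 0 ≤ d * (b * (e + 1) - 1) := mul_nonneg hd0 (by nlinarith)
    have h2 : 0 ≤ (b - 1) * e * (b * (e + 1) - 2) :=
      mul_nonneg (mul_nonneg (by linarith) (by linarith)) (by nlinarith)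
    nlinarith

theorem wpWeight_diff (s n : ℕ) (hs : 2 ≤ s) (hn : (s + 1) * (s + 2) ≤ 2 * n)
    (e : ℕ) (he : e ≤ s)
    (heq : (n : ℤ) - (s * (s + 1)) / 2
      = ⌊(n : ℚ) / ((s : ℚ) + 1) - (s : ℚ) / 2⌋ * ((s : ℤ) + 1) + e)
    (b d : ℕ) (hd : d ≤ s - 1)
    (hbd : wp s n 0 + (e : ℤ) = b * s + d) :
    wp (s - 1) n 0 = wp s n 0 + b + 1 ∧
    wp s n 0 < wp (s - 1) n 0 ∧
    wpWeight s n - wpWeight (s - 1) n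
      = wp s n 0 * ((s : ℤ) + 1 - e) + (b : ℤ) * d * ((s : ℤ) + 1)
        + ((b : ℤ) * ((b : ℤ) - 1) * s * ((s : ℤ) + 1)) / 2 ∧
    2 * wp s n 0 ≤ wpWeight s n - wpWeight (s - 1) n := by
  set t := wp s n 0
  have hs₁ : ((s - 1 : ℕ) : ℤ) = s - 1 := by omega
  have hn₀ : 2 * (n : ℤ) = 2 * t * (s + 1) + 2 * e + s * (s + 1) := by
    rw [← wp_zero] at heq
    linear_combination 2 * heq + Int.mul_ediv_cancel' (Int.even_mul_succ_self (s : ℤ)).two_dvd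
  have hn₁ : 2 * (n : ℤ) = 2 * (t + b + 1) * ((s - 1 : ℕ) + 1) + 2 * d
      + (s - 1 : ℕ) * ((s - 1 : ℕ) + 1) := by
    rw [hs₁]; linear_combination hn₀ + 2 * hbd
  have hq : wp (s - 1) n 0 = t + b + 1 := by
    simpa [show ¬ s - 1 + 1 - d ≤ 0 by omega] using wp_eq hd hn₁ (Nat.zero_le _)
  have hW₀ := twelve_mul_wpWeight he hn₀
  have hW₁ := twelve_mul_wpWeight hd hn₁
  rw [hs₁] at hW₁
  have hdiff : 2 * (wpWeight s n - wpWeight (s - 1) n)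
      = 2 * (t * (s + 1 - e) + b * d * (s + 1)) + b * (b - 1) * s * (s + 1) := by
    refine mul_left_cancel₀ (show (6 : ℤ) ≠ 0 by norm_num) ?_
    linear_combination hW₀ - hW₁ + (6 * d + 6 * e - 6 * t - 12 * s + 6 * b * s - 12) * hbd
  have hhalf := Int.mul_ediv_cancel'
    (((Int.even_mul_pred_self (b : ℤ)).mul_right s).mul_right (s + 1)).two_dvd
  have ht : 1 ≤ t := by
    have : ((s : ℤ) + 1) * (s + 2) ≤ 2 * n := by exact_mod_cast hn
    nlinarith
  refine ⟨hq, by omega, mul_left_cancel₀ two_ne_zero (by linear_combination hdiff - hhalf), ?_⟩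
  have := four_mul_le_of_add_eq_mul_add ht (Nat.cast_nonneg e) (by exact_mod_cast he)
    (Nat.cast_nonneg b) (Nat.cast_nonneg d) (by omega) hbd
  linarith
end

section
/- For every α = (a₁, …, a_{s+1}) ∈ ℑ(s,n), ℘(s,n) is a modification of α; that is, there exists a finite sequence α = α₁, α₂, …, α_r = ℘(s,n) within ℑ(s,n) such that each α_{i} is an elementary modification (addition of some η(i,j)) of α_{i−1}. -/
/-- `b` is an elementary modification of `a` lying in `ℑ(s,n)`:
`b = a + η(i,j)` for some `i < j`, with `b` strictly increasing and summing to `n`. -/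
def ElemMod (s n : ℕ) (a b : Fin (s + 1) → ℤ) : Prop :=
  (∃ i j : Fin (s + 1), i < j ∧
      b = fun k => a k + (if k = i then 1 else 0) - (if k = j then 1 else 0)) ∧
    StrictMono b ∧ (∑ k, b k) = n

/-! Every elementary modification `a ↦ a + η(i,j)` (`i < j`) that stays strictly increasing
needs `aᵢ + 1 < aⱼ - 1`, so it lowers `∑ aₖ²` by `2(aⱼ - aᵢ - 1) > 0`; hence it suffices to show
that a tuple of `ℑ(s,n)` admitting no elementary modification is `℘(s,n)`.

With `cₖ = aₖ - k`, strict monotonicity of `a` is monotonicity of `c`. If `c` grows by at least 2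
between some `i < j`, the closest such pair is admissible: strictly between them `c` lies in
`[cᵢ + 1, cⱼ - 1]`. Otherwise `c` takes at most two consecutive values, so every tail sum
`aⱼ + ⋯ + a_s` equals `(m + 1) aⱼ + m(m + 1)/2 + e` with `m = s - j` and `0 ≤ e ≤ m`, which is
exactly what makes the floor recursion defining `℘(s,n)` return `aⱼ`. -/

open Finset

theorem Relation.reflTransGen_of_exists_descent {α : Type*} {r : α → α → Prop} {P : α → Prop}
    {t : α} (f : α → ℕ) (hstep : ∀ a, P a → a = t ∨ ∃ b, r a b)
    (hr : ∀ a b, P a → r a b → P b ∧ f b < f a) {a : α} (ha : P a) :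
    Relation.ReflTransGen r a t := by
  induction hfa : f a using Nat.strong_induction_on generalizing a with
  | _ k ih =>
    obtain rfl | ⟨b, hab⟩ := hstep a ha
    · rfl
    · obtain ⟨hb, hlt⟩ := hr a b ha hab
      exact .head hab (ih _ (hfa ▸ hlt) hb rfl)

section AddIteSubIte

variable {ι : Type*} [DecidableEq ι]

lemma sum_add_ite_sub_ite [Fintype ι] (a : ι → ℤ) (i j : ι) :
    ∑ k, (a k + (if k = i then 1 else 0) - (if k = j then 1 else 0)) = ∑ k, a k := by
  simp [sum_add_distrib, sum_sub_distrib]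

lemma sum_sq_add_ite_sub_ite [Fintype ι] (a : ι → ℤ) {i j : ι} (hij : i ≠ j) :
    ∑ k, (a k + (if k = i then 1 else 0) - (if k = j then 1 else 0)) ^ 2
      = ∑ k, a k ^ 2 + 2 * (a i - a j + 1) := by
  have hpt : ∀ k, (a k + (if k = i then 1 else 0) - (if k = j then 1 else 0)) ^ 2
      = a k ^ 2 + ((if k = i then 2 * a i + 1 else 0) + (if k = j then 1 - 2 * a j else 0)) := by
    intro k
    split_ifs <;> subst_vars <;> first | exact absurd rfl hij | ring
  simp only [hpt, sum_add_distrib, sum_ite_eq', mem_univ, if_true]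
  ring

lemma monotone_add_ite_sub_ite [LinearOrder ι] {c : ι → ℤ} (hc : Monotone c) {i j : ι}
    (hij : i < j) (hgap : c i + 2 ≤ c j)
    (hmid : ∀ l, i < l → l < j → c i + 1 ≤ c l ∧ c l + 1 ≤ c j) :
    Monotone fun k => c k + (if k = i then 1 else 0) - (if k = j then 1 else 0) := by
  have hi : ∀ l, i < l → l ≠ j → c i + 1 ≤ c l := fun l hil hlj =>
    (lt_or_gt_of_ne hlj).elim (fun h => (hmid l hil h).1) fun h => by linarith [hc h.le]
  have hj : ∀ k, k < j → k ≠ i → c k + 1 ≤ c j := fun k hkj hki =>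
    (lt_or_gt_of_ne hki).elim (fun h => by linarith [hc h.le]) fun h => (hmid k h hkj).2
  intro k l hkl
  have := hc hkl
  simp only
  split_ifs <;> subst_vars
  all_goals first
    | omega
    | linarith [hi l (lt_of_le_of_ne hkl (Ne.symm ‹_›)) ‹_›]
    | linarith [hj k (lt_of_le_of_ne hkl ‹_›) ‹_›]

end AddIteSubIte

lemma Fin.strictMono_iff_monotone_sub_val {m : ℕ} {a : Fin (m + 1) → ℤ} :
    StrictMono a ↔ Monotone fun k => a k - ((k : ℕ) : ℤ) := by
  rw [Fin.strictMono_iff_lt_succ, Fin.monotone_iff_le_succ]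
  refine forall_congr' fun k => ?_
  simp only [Fin.val_castSucc, Fin.val_succ]
  push_cast
  omega

lemma exists_closest_pair_add_two_le {m : ℕ} (c : Fin m → ℤ)
    (h : ∃ i j, i < j ∧ c i + 2 ≤ c j) :
    ∃ i j, i < j ∧ c i + 2 ≤ c j ∧ ∀ l, i < l → l < j → c i + 1 ≤ c l ∧ c l + 1 ≤ c j := by
  obtain ⟨i₀, j₀, hij, hgap⟩ := h
  obtain ⟨⟨i, j⟩, hmem, hmin⟩ := exists_min_image
    (univ.filter fun p : Fin m × Fin m => p.1 < p.2 ∧ c p.1 + 2 ≤ c p.2)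
    (fun p => (p.2 : ℕ) - p.1) ⟨(i₀, j₀), by simp [hij, hgap]⟩
  simp only [mem_filter, mem_univ, true_and] at hmem hmin
  refine ⟨i, j, hmem.1, hmem.2, fun l hil hlj => ⟨?_, ?_⟩⟩
  · by_contra! h
    have : (j : ℕ) - i ≤ j - l := hmin (l, j) ⟨hlj, by linarith [hmem.2]⟩
    simp only [Fin.lt_def] at hil hlj
    omega
  · by_contra! h
    have : (j : ℕ) - i ≤ l - i := hmin (i, l) ⟨hil, by linarith [hmem.2]⟩
    simp only [Fin.lt_def] at hil hlj
    omega

lemma floor_sum_range_div_sub_half (x : ℕ → ℤ) (m : ℕ)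
    (hx : ∀ d ≤ m, x 0 ≤ x d - d ∧ x d - d ≤ x 0 + 1) :
    ⌊((∑ d ∈ range (m + 1), x d : ℤ) : ℚ) / (m + 1) - m / 2⌋ = x 0 := by
  have hgauss : (∑ d ∈ range (m + 1), (d : ℤ)) * 2 = (m + 1) * m := by
    have h := congrArg (Nat.cast : ℕ → ℤ) (sum_range_id_mul_two (m + 1))
    push_cast at h
    simpa using h
  have hlow : (m + 1) * x 0 + ∑ d ∈ range (m + 1), (d : ℤ) ≤ ∑ d ∈ range (m + 1), x d := by
    calc (m + 1) * x 0 + ∑ d ∈ range (m + 1), (d : ℤ) = ∑ d ∈ range (m + 1), (x 0 + d) := by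
          simp [sum_add_distrib]
      _ ≤ _ := sum_le_sum fun d hd => by linarith [(hx d (by simpa [Nat.lt_succ_iff] using hd)).1]
  -- the `d = 0` term carries no excess over `x 0 + d`, so the total excess is at most `m`
  have hupp : ∑ d ∈ range (m + 1), x d ≤ (m + 1) * x 0 + ∑ d ∈ range (m + 1), (d : ℤ) + m := by
    calc ∑ d ∈ range (m + 1), x d = ∑ d ∈ range m, x (d + 1) + x 0 := sum_range_succ' x m
      _ ≤ ∑ d ∈ range m, (x 0 + (d + 1 : ℕ) + 1) + x 0 := by
          gcongr with d hd
          linarith [(hx (d + 1) (by simp at hd; omega)).2]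
      _ = (m + 1) * x 0 + ∑ d ∈ range (m + 1), (d : ℤ) + m := by
          rw [sum_range_succ' (fun d => (d : ℤ))]
          simp only [Nat.cast_add, Nat.cast_one, sum_add_distrib, sum_const, card_range,
            Int.nsmul_eq_mul, mul_one, CharP.cast_eq_zero, add_zero]
          ring
  rw [Int.floor_eq_iff, le_sub_iff_add_le, sub_lt_iff_lt_add, le_div_iff₀ (by positivity),
    div_lt_iff₀ (by positivity)]
  have hgaussQ : ((∑ d ∈ range (m + 1), (d : ℤ) : ℤ) : ℚ) * 2 = (m + 1) * m := by
    exact_mod_cast hgauss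
  have hlowQ := (Int.cast_le (R := ℚ)).2 hlow
  have huppQ := (Int.cast_le (R := ℚ)).2 hupp
  push_cast at hlowQ huppQ hgaussQ ⊢
  constructor <;> nlinarith

section TwoValuedShift

variable {s n : ℕ} (x : ℕ → ℤ)
  (hx : ∀ j k, j ≤ k → k ≤ s → x j - j ≤ x k - k ∧ x k - k ≤ x j - j + 1)
  (hsum : ∑ k ∈ range (s + 1), x k = n)
include hx hsum

lemma wpSum_eq_sum_range {j : ℕ} (hj : j ≤ s + 1) : wpSum s n j = ∑ k ∈ range j, x k := by
  induction j with
  | zero => rfl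
  | succ j ih =>
    obtain ⟨m, rfl⟩ : ∃ m, s = j + m := ⟨s - j, by omega⟩
    have htail : (n : ℤ) - ∑ k ∈ range j, x k = ∑ d ∈ range (m + 1), x (j + d) := by
      rw [← hsum, add_assoc, sum_range_add, add_sub_cancel_left]
    rw [wpSum, ih (by omega), sum_range_succ, ← Int.cast_natCast (R := ℚ) n, ← Int.cast_sub, htail,
      Nat.cast_add, show (j : ℚ) + m + 1 - j = m + 1 by ring, show (j : ℚ) + m - j = m by ring]
    congr 1
    exact floor_sum_range_div_sub_half (fun d => x (j + d)) m fun d hd => by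
      have := hx j (j + d) (by omega) (by omega)
      simp only [add_zero, Nat.cast_add] at this ⊢
      constructor <;> linarith [this.1, this.2]

lemma wp_eq_s19 {j : ℕ} (hj : j ≤ s) : wp s n j = x j := by
  rw [wp, wpSum_eq_sum_range x hx hsum (by omega), wpSum_eq_sum_range x hx hsum (by omega),
    sum_range_succ, add_sub_cancel_left]

end TwoValuedShift

def IsBalanced {m : ℕ} (a : Fin m → ℤ) : Prop :=
  ∀ i j, i < j → a j - (j : ℕ) ≤ a i - (i : ℕ) + 1

lemma ElemMod.sum_sq_lt {s n : ℕ} {a b : Fin (s + 1) → ℤ} (h : ElemMod s n a b) :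
    ∑ k, b k ^ 2 < ∑ k, a k ^ 2 := by
  obtain ⟨⟨i, j, hij, rfl⟩, hb, -⟩ := h
  have hbij : a i + 1 < a j - 1 := by simpa [hij.ne, hij.ne'] using hb hij
  rw [sum_sq_add_ite_sub_ite a hij.ne]
  linarith

lemma exists_elemMod_of_not_isBalanced {s n : ℕ} {a : Fin (s + 1) → ℤ} (ha : StrictMono a)
    (hsum : ∑ k, a k = n) (h : ¬IsBalanced a) : ∃ b, ElemMod s n a b := by
  have hpair : ∃ i j, i < j ∧ a i - (i : ℕ) + 2 ≤ a j - (j : ℕ) := by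
    simp only [IsBalanced, not_forall, not_le] at h
    obtain ⟨i, j, hij, hlt⟩ := h
    exact ⟨i, j, hij, by omega⟩
  obtain ⟨i, j, hij, hgap, hmid⟩ := exists_closest_pair_add_two_le _ hpair
  refine ⟨_, ⟨i, j, hij, rfl⟩, ?_, by rw [sum_add_ite_sub_ite, hsum]⟩
  rw [Fin.strictMono_iff_monotone_sub_val]
  convert monotone_add_ite_sub_ite (Fin.strictMono_iff_monotone_sub_val.1 ha) hij hgap hmid
    using 2
  ring

lemma eq_wp_of_isBalanced {s n : ℕ} {a : Fin (s + 1) → ℤ} (ha : StrictMono a)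
    (hsum : ∑ k, a k = n) (h : IsBalanced a) :
    a = fun j : Fin (s + 1) => wp s n j := by
  set x : ℕ → ℤ := fun k => if hk : k < s + 1 then a ⟨k, hk⟩ else 0
  have hxa : ∀ k : Fin (s + 1), x k = a k := fun k => dif_pos k.isLt
  have hx : ∀ j k, j ≤ k → k ≤ s → x j - j ≤ x k - k ∧ x k - k ≤ x j - j + 1 := by
    intro j k hjk hks
    have hxj := hxa ⟨j, by omega⟩
    have hxk := hxa ⟨k, by omega⟩
    have hmono := Fin.strictMono_iff_monotone_sub_val.1 ha
      (show (⟨j, by omega⟩ : Fin (s + 1)) ≤ ⟨k, by omega⟩ from hjk)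
    simp only at hxj hxk hmono
    rcases hjk.lt_or_eq with hlt | rfl
    · have hbal := h ⟨j, by omega⟩ ⟨k, by omega⟩ (Fin.mk_lt_mk.2 hlt)
      simp only at hbal
      omega
    · omega
  have hxsum : ∑ k ∈ range (s + 1), x k = n := by
    rw [← Fin.sum_univ_eq_sum_range, ← hsum]
    simp only [hxa]
  funext j
  rw [wp_eq_s19 x hx hxsum (Nat.lt_succ_iff.1 j.isLt), hxa]

theorem wp_is_modification_general (s n : ℕ)
    (a : Fin (s + 1) → ℤ) (ha : StrictMono a) (hsum : ∑ i, a i = n) :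
    Relation.ReflTransGen (ElemMod s n) a (fun j : Fin (s + 1) => wp s n j) := by
  refine Relation.reflTransGen_of_exists_descent (P := fun b => StrictMono b ∧ ∑ k, b k = (n : ℤ))
    (fun b : Fin (s + 1) → ℤ => (∑ k, b k ^ 2).toNat) ?_ ?_ ⟨ha, hsum⟩
  · rintro b ⟨hb, hbsum⟩
    by_cases hbal : IsBalanced b
    · exact .inl (eq_wp_of_isBalanced hb hbsum hbal)
    · exact .inr (exists_elemMod_of_not_isBalanced hb hbsum hbal)
  · rintro b b' - hbb'
    have hlt := hbb'.sum_sq_lt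
    have hnonneg : 0 ≤ ∑ k, b' k ^ 2 := sum_nonneg fun k _ => sq_nonneg _
    exact ⟨⟨hbb'.2.1, hbb'.2.2⟩, by omega⟩

theorem wp_is_modification (s n : ℕ) (hs : 1 ≤ s) (hn : 1 ≤ n)
    (a : Fin (s + 1) → ℤ) (ha : StrictMono a) (hsum : ∑ i, a i = n) :
    Relation.ReflTransGen (ElemMod s n) a (fun j : Fin (s + 1) => wp s n j) :=
  wp_is_modification_general s n a ha hsum
end
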